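/- Assume d1 < x_T < d2 and that x⁰_{x,s}(t) ∈ (d1,d2) for every x ∈ (d1,d2), every 0 ≤ s < T and every t ∈ [s,T]. Then for each T' ∈ [0,T), the function u is bounded on (d1,d2)×[0,T']; in particular u(x,s) ≤ a1·(d2−d1)²/tanh(a1(T−T')/2) for all x ∈ (d1,d2) and s ∈ [0,T']. -/

import Mathlib

/-- The deterministic trajectory `x⁰_{x,s}`. -/
noncomputable def traj (a0 a1 T xT x s t : ℝ) : ℝ :=
  (x + a0 / a1) * Real.sinh (a1 * (T - t)) / Real.sinh (a1 * (T - s)) +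
    (xT + a0 / a1) * Real.sinh (a1 * (t - s)) / Real.sinh (a1 * (T - s)) - a0 / a1

/-- The two-point cost `u(x,s;d,t)`. -/
noncomputable def cost (a0 a1 T xT x s d t : ℝ) : ℝ :=
  a1 * Real.sinh (a1 * (T - s)) * (d - traj a0 a1 T xT x s t) ^ 2 /
    (2 * Real.sinh (a1 * (T - t)) * Real.sinh (a1 * (t - s)))

/-- The exit cost `u(x,s) = inf { u(x,s;d,t) : d ∈ {d1,d2}, t ∈ (s,T) }`. -/
noncomputable def uval (a0 a1 T xT d1 d2 x s : ℝ) : ℝ :=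
  sInf {r : ℝ | ∃ d, (d = d1 ∨ d = d2) ∧ ∃ t ∈ Set.Ioo s T, r = cost a0 a1 T xT x s d t}

lemma tanh_pos_aux {x : ℝ} (hx : 0 < x) : 0 < Real.tanh x := by
  rw [Real.tanh_eq_sinh_div_cosh]
  exact div_pos (Real.sinh_pos_iff.mpr hx) (Real.cosh_pos x)

lemma tanh_mono_aux {a b : ℝ} (hab : a ≤ b) : Real.tanh a ≤ Real.tanh b := by
  rw [Real.tanh_eq_sinh_div_cosh, Real.tanh_eq_sinh_div_cosh,
    div_le_div_iff₀ (Real.cosh_pos a) (Real.cosh_pos b)]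
  have h : Real.sinh (a - b) ≤ 0 := by
    calc Real.sinh (a - b) ≤ Real.sinh 0 := Real.sinh_le_sinh.mpr (by linarith)
    _ = 0 := Real.sinh_zero
  rw [Real.sinh_sub] at h
  linarith

/-- `a1 / tanh (a1 * z / 2)` rewritten via `|a1|`. -/
lemma g_abs (a1 z : ℝ) : a1 / Real.tanh (a1 * z / 2) = |a1| / Real.tanh (|a1| * z / 2) := by
  rcases le_or_gt 0 a1 with h | h
  · rw [abs_of_nonneg h]
  · rw [abs_of_neg h]
    rw [show -a1 * z / 2 = -(a1 * z / 2) by ring, Real.tanh_neg, neg_div_neg_eq]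

lemma g_pos {a1 z : ℝ} (ha1 : a1 ≠ 0) (hz : 0 < z) : 0 < a1 / Real.tanh (a1 * z / 2) := by
  rw [g_abs]
  have h0 : 0 < |a1| := abs_pos.mpr ha1
  exact div_pos h0 (tanh_pos_aux (by positivity))

lemma g_anti {a1 z z' : ℝ} (ha1 : a1 ≠ 0) (hz' : 0 < z') (hzz : z' ≤ z) :
    a1 / Real.tanh (a1 * z / 2) ≤ a1 / Real.tanh (a1 * z' / 2) := by
  rw [g_abs, g_abs a1 z']
  have h0 : 0 < |a1| := abs_pos.mpr ha1
  exact div_le_div_of_nonneg_left h0.le (tanh_pos_aux (by positivity))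
    (tanh_mono_aux (by nlinarith))

theorem stmt_9 (a0 a1 T xT d1 d2 : ℝ) (ha1 : a1 ≠ 0) (hT : 0 < T)
    (h1 : d1 < xT) (h2 : xT < d2)
    (hint : ∀ x ∈ Set.Ioo d1 d2, ∀ s, 0 ≤ s → s < T →
      ∀ t ∈ Set.Icc s T, traj a0 a1 T xT x s t ∈ Set.Ioo d1 d2) :
    ∀ T', 0 ≤ T' → T' < T →
      (∃ M : ℝ, ∀ x ∈ Set.Ioo d1 d2, ∀ s ∈ Set.Icc 0 T',
        uval a0 a1 T xT d1 d2 x s ≤ M) ∧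
      ∀ x ∈ Set.Ioo d1 d2, ∀ s ∈ Set.Icc 0 T',
        uval a0 a1 T xT d1 d2 x s ≤
          a1 * (d2 - d1) ^ 2 / Real.tanh (a1 * (T - T') / 2) := by
  intro T' hT'0 hT'T
  have key : ∀ x ∈ Set.Ioo d1 d2, ∀ s ∈ Set.Icc 0 T',
      uval a0 a1 T xT d1 d2 x s ≤ a1 * (d2 - d1) ^ 2 / Real.tanh (a1 * (T - T') / 2) := by
    intro x hx s hs
    have hsT : s < T := lt_of_le_of_lt hs.2 hT'T
    set t0 : ℝ := (s + T) / 2 with ht0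
    have ht0mem : t0 ∈ Set.Ioo s T := ⟨by simp only [ht0]; linarith, by simp only [ht0]; linarith⟩
    set X : ℝ := traj a0 a1 T xT x s t0 with hX
    have hXmem : X ∈ Set.Ioo d1 d2 :=
      hint x hx s hs.1 hsT t0 ⟨ht0mem.1.le, ht0mem.2.le⟩
    set y : ℝ := a1 * (T - s) / 2 with hy
    have hy0 : y ≠ 0 := by
      have : T - s ≠ 0 := by linarith
      simp only [hy]
      positivity
    have hsy : Real.sinh y ≠ 0 := Real.sinh_ne_zero.mpr hy0
    have hcy : Real.cosh y ≠ 0 := (Real.cosh_pos y).ne'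
    have hty : Real.tanh y ≠ 0 := by
      rw [Real.tanh_eq_sinh_div_cosh]
      exact div_ne_zero hsy hcy
    -- cost at the midpoint
    have hcost : cost a0 a1 T xT x s d2 t0 = a1 * (d2 - X) ^ 2 / Real.tanh y := by
      have e1 : a1 * (T - t0) = y := by simp only [ht0, hy]; ring
      have e2 : a1 * (t0 - s) = y := by simp only [ht0, hy]; ring
      have e3 : a1 * (T - s) = 2 * y := by simp only [hy]; ring
      rw [cost, ← hX, e1, e2, e3, Real.sinh_two_mul, Real.tanh_eq_sinh_div_cosh]
      field_simp
    -- the value is in the set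
    have hmem : cost a0 a1 T xT x s d2 t0 ∈
        {r : ℝ | ∃ d, (d = d1 ∨ d = d2) ∧ ∃ t ∈ Set.Ioo s T, r = cost a0 a1 T xT x s d t} :=
      ⟨d2, Or.inr rfl, t0, ht0mem, rfl⟩
    -- bound the cost
    have hq : (d2 - X) ^ 2 ≤ (d2 - d1) ^ 2 := by nlinarith [hXmem.1, hXmem.2]
    have hgpos : 0 < a1 / Real.tanh y := by
      rw [hy]; exact g_pos ha1 (by linarith)
    have hbound : cost a0 a1 T xT x s d2 t0 ≤
        a1 * (d2 - d1) ^ 2 / Real.tanh (a1 * (T - T') / 2) := by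
      rw [hcost]
      calc a1 * (d2 - X) ^ 2 / Real.tanh y = (d2 - X) ^ 2 * (a1 / Real.tanh y) := by ring
        _ ≤ (d2 - d1) ^ 2 * (a1 / Real.tanh y) :=
          mul_le_mul_of_nonneg_right hq hgpos.le
        _ ≤ (d2 - d1) ^ 2 * (a1 / Real.tanh (a1 * (T - T') / 2)) :=
          mul_le_mul_of_nonneg_left
            (by rw [hy]; exact g_anti ha1 (by linarith) (by linarith [hs.2])) (sq_nonneg _)
        _ = a1 * (d2 - d1) ^ 2 / Real.tanh (a1 * (T - T') / 2) := by ring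
    rw [uval]
    by_cases hbdd : BddBelow
        {r : ℝ | ∃ d, (d = d1 ∨ d = d2) ∧ ∃ t ∈ Set.Ioo s T, r = cost a0 a1 T xT x s d t}
    · exact le_trans (csInf_le hbdd hmem) hbound
    · rw [Real.sInf_of_not_bddBelow hbdd]
      have : 0 < a1 / Real.tanh (a1 * (T - T') / 2) := g_pos ha1 (by linarith)
      have := mul_nonneg (sq_nonneg (d2 - d1)) this.le
      calc (0:ℝ) ≤ (d2 - d1) ^ 2 * (a1 / Real.tanh (a1 * (T - T') / 2)) := this
        _ = a1 * (d2 - d1) ^ 2 / Real.tanh (a1 * (T - T') / 2) := by ring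
  exact ⟨⟨_, key⟩, key⟩
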